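/- Let K be a field, F ⊆ K⟨X⟩, and f an element of the two-sided ideal (F). Let Q = (V, E, X, s, t, l) be a labelled quiver such that f is compatible with Q and all elements of F are uniformly compatible with Q. Then for every representation (𝒱, φ) of Q consistent with the labelling such that every realization of every element of F is the zero map, every realization of f is the zero map; that is, φ_{v,w}(f) = 0 for all (v, w) ∈ σ(f). -/

import Mathlib

open scoped BigOperators

/-- The free `R`-algebra `R⟨X⟩` on `X`, as the monoid algebra over `R`
of the free monoid `⟨X⟩` of words over `X`. -/
abbrev FreeAlg (R X : Type*) [CommRing R] := MonoidAlgebra R (FreeMonoid X)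

/-- The monomial in `R⟨X⟩` corresponding to a word `m ∈ ⟨X⟩`. -/
noncomputable def monom (R : Type*) [CommRing R] {X : Type*} (m : FreeMonoid X) : FreeAlg R X :=
  MonoidAlgebra.of R (FreeMonoid X) m

/-- `h` is obtained from `f` by a rewriting step using `g`: some monomial `m_g` in the
support of `g` divides a monomial `a·m_g·b` in the support of `f`, and
`h = f + λ·a·g·b` for some `λ ∈ R`. -/
def RewriteStep {R X : Type*} [CommRing R] (g f h : FreeAlg R X) : Prop :=
  ∃ (a b mg : FreeMonoid X) (lam : R),
    mg ∈ (g.coeff : FreeMonoid X →₀ R).support ∧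
    a * mg * b ∈ (f.coeff : FreeMonoid X →₀ R).support ∧
    h = f + lam • (monom R a * g * monom R b)

/-- `f` can be rewritten to `h` using the set `G`: there is a finite chain of rewriting
steps, each using an element of `G`, leading from `f` to `h`. -/
def RewritesTo {R X : Type*} [CommRing R] (G : Set (FreeAlg R X)) (f h : FreeAlg R X) : Prop :=
  Relation.ReflTransGen (fun p q => ∃ g ∈ G, RewriteStep g p q) f h

/-- Membership in the two-sided ideal `(F)` generated by `F`:
`f` is a finite sum `Σᵢ aᵢ·fᵢ·bᵢ` with `aᵢ, bᵢ ∈ R⟨X⟩` and `fᵢ ∈ F`. -/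
def MemIdeal {R X : Type*} [CommRing R] (F : Set (FreeAlg R X)) (f : FreeAlg R X) : Prop :=
  ∃ (n : ℕ) (a b g : Fin n → FreeAlg R X),
    (∀ i, g i ∈ F) ∧ f = ∑ i, a i * g i * b i

/-- A labelled quiver `Q = (V, E, X, s, t, l)`: a directed multigraph with vertex set `V`,
edge set `E`, source and target maps `s, t : E → V` and labelling `l : E → X`. -/
structure LabelledQuiver (V E X : Type*) where
  src : E → V
  tgt : E → V
  lab : E → X

/-- Paths in a labelled quiver `Q`; `LQPath Q u w` is the type of paths with source `u` and
target `w`.  `nil v` is the empty path at `v`; `cons e p` appends the edge `e` after `p`. -/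
inductive LQPath {V E X : Type*} (Q : LabelledQuiver V E X) : V → V → Type _ where
  | nil (v : V) : LQPath Q v v
  | cons {u : V} (e : E) (p : LQPath Q u (Q.src e)) : LQPath Q u (Q.tgt e)

namespace LQPath
variable {V E X : Type*} {Q : LabelledQuiver V E X}
/-- The label `l(p) = l(eₙ)⋯l(e₁) ∈ ⟨X⟩` of a path; the empty path has label `1`. -/
def label : {u w : V} → LQPath Q u w → FreeMonoid X
  | _, _, .nil _ => 1
  | _, _, .cons e p => FreeMonoid.of (Q.lab e) * p.label
end LQPath

namespace LabelledQuiver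

variable {V E X : Type*} (Q : LabelledQuiver V E X)

/-- The set of signatures `σ(m) = {(s(p), t(p)) : p a path in Q with l(p) = m}`. -/
def sigmaM (m : FreeMonoid X) : Set (V × V) :=
  {vw | ∃ p : LQPath Q vw.1 vw.2, p.label = m}

variable {R : Type*} [CommRing R]

/-- The set of signatures `σ(f) = ⋂_{m ∈ supp(f)} σ(m)` of a polynomial. -/
def sigmaP (f : FreeAlg R X) : Set (V × V) :=
  ⋂ m ∈ (f.coeff : FreeMonoid X →₀ R).support, Q.sigmaM m

/-- `f` is compatible with `Q` if `σ(f) ≠ ∅`. -/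
def Compatible (f : FreeAlg R X) : Prop :=
  (Q.sigmaP f).Nonempty

/-- `f` is uniformly compatible with `Q` if it is compatible and all monomials in its
support have the same set of signatures. -/
def UniformlyCompatible (f : FreeAlg R X) : Prop :=
  Q.Compatible f ∧
    ∀ m ∈ (f.coeff : FreeMonoid X →₀ R).support, ∀ m' ∈ (f.coeff : FreeMonoid X →₀ R).support,
      Q.sigmaM m = Q.sigmaM m'

/-- The set of sources `s(f)` of a polynomial: the projection of `σ(f)` to the first
component. -/
def srcSet (f : FreeAlg R X) : Set V := Prod.fst '' Q.sigmaP f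

/-- The set of targets `t(f)` of a polynomial: the projection of `σ(f)` to the second
component. -/
def tgtSet (f : FreeAlg R X) : Set V := Prod.snd '' Q.sigmaP f

end LabelledQuiver

/-- A representation `(𝒱, φ)` of a labelled quiver `Q` by `K`-vector spaces: a vector space
`𝒱_v` for each vertex `v` and a `K`-linear map `φ(e) : 𝒱_{s(e)} → 𝒱_{t(e)}` for each edge. -/
structure QuiverRep (K : Type*) [Field K] {V E X : Type*} (Q : LabelledQuiver V E X) where
  space : V → Type*
  [addCommGroup : ∀ v, AddCommGroup (space v)]
  [module : ∀ v, Module K (space v)]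
  map : (e : E) → space (Q.src e) →ₗ[K] space (Q.tgt e)

attribute [instance] QuiverRep.addCommGroup QuiverRep.module

namespace QuiverRep

variable {K : Type*} [Field K] {V E X : Type*} {Q : LabelledQuiver V E X}

/-- The linear map `φ(eₙ)⋯φ(e₁)` induced by a path; the empty path induces the identity. -/
def pathMap (ρ : QuiverRep K Q) : {u w : V} → LQPath Q u w → (ρ.space u →ₗ[K] ρ.space w)
  | _, _, .nil _ => LinearMap.id
  | _, _, .cons e p => (ρ.map e).comp (ρ.pathMap p)

/-- A representation is consistent with the labelling if any two paths with the same source,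
the same target and the same label induce the same linear map. -/
def Consistent (ρ : QuiverRep K Q) : Prop :=
  ∀ (u w : V) (p q : LQPath Q u w), p.label = q.label → ρ.pathMap p = ρ.pathMap q

/-- The realization `φ_{v,w}(f)` of a polynomial `f` w.r.t. a representation: the `K`-linear
extension of the assignment sending the label of a path from `v` to `w` to the composition of
the linear maps along the path (an arbitrary such path is chosen for each monomial; for a
consistent representation the result does not depend on this choice). -/
noncomputable def realize (ρ : QuiverRep K Q) (v w : V) (f : FreeAlg K X) :
    ρ.space v →ₗ[K] ρ.space w :=
  Finsupp.sum (f.coeff : FreeMonoid X →₀ K) fun m c =>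
    letI := Classical.propDecidable (∃ p : LQPath Q v w, p.label = m)
    c • (if h : ∃ p : LQPath Q v w, p.label = m then ρ.pathMap h.choose else 0)

end QuiverRep

section AuxiliaryLemmas

variable {V E X : Type*} {Q : LabelledQuiver V E X}

namespace LQPath

/-- Concatenation of paths. -/
def comp : {u v w : V} → LQPath Q u v → LQPath Q v w → LQPath Q u w
  | _, _, _, p, .nil _ => p
  | _, _, _, p, .cons e q => .cons e (p.comp q)

theorem label_comp : ∀ {u v w : V} (p : LQPath Q u v) (q : LQPath Q v w),
    (p.comp q).label = q.label * p.label
  | _, _, _, _, .nil _ => by simp [comp, label]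
  | _, _, _, p, .cons e q => by
    simp [comp, label, label_comp p q, mul_assoc]

theorem label_split_list : ∀ (L : List X) {v w : V} (p : LQPath Q v w) (y : FreeMonoid X),
    p.label = FreeMonoid.ofList L * y →
    ∃ u, ∃ (p1 : LQPath Q u w) (p2 : LQPath Q v u),
      p1.label = FreeMonoid.ofList L ∧ p2.label = y
  | [], _, _, p, y, h => ⟨_, .nil _, p, by simp [label], by simpa using h⟩
  | c :: L, v, w, p, y, h => by
    cases p with
    | nil =>
      exfalso
      have h2 := congrArg FreeMonoid.toList h
      simp [label] at h2
    | cons e p' =>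
      have h2 := congrArg FreeMonoid.toList h
      simp only [label, FreeMonoid.toList_mul, FreeMonoid.toList_of,
        FreeMonoid.toList_ofList, List.cons_append, List.singleton_append,
        List.cons.injEq] at h2
      obtain ⟨hc, hrest⟩ := h2
      have hp' : p'.label = FreeMonoid.ofList L * y := by
        apply FreeMonoid.toList.injective
        simpa [FreeMonoid.toList_mul, FreeMonoid.toList_ofList] using hrest
      obtain ⟨u, p1, p2, h1, h2'⟩ := label_split_list L p' y hp'
      refine ⟨u, .cons e p1, p2, ?_, h2'⟩
      apply FreeMonoid.toList.injective
      simp [label, h1, hc]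

theorem label_split {v w : V} (p : LQPath Q v w) (x y : FreeMonoid X)
    (h : p.label = x * y) :
    ∃ u, ∃ (p1 : LQPath Q u w) (p2 : LQPath Q v u), p1.label = x ∧ p2.label = y := by
  have := label_split_list x.toList p y (by simpa [FreeMonoid.ofList_toList] using h)
  simpa [FreeMonoid.ofList_toList] using this

end LQPath

namespace QuiverRep

variable {K : Type*} [Field K]

theorem pathMap_comp (ρ : QuiverRep K Q) :
    ∀ {u v w : V} (p : LQPath Q u v) (q : LQPath Q v w),
      ρ.pathMap (p.comp q) = (ρ.pathMap q).comp (ρ.pathMap p)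
  | _, _, _, p, .nil _ => by simp [LQPath.comp, pathMap]
  | _, _, _, p, .cons e q => by
    simp [LQPath.comp, pathMap, pathMap_comp ρ p q, LinearMap.comp_assoc]

/-- The value assigned to a single monomial by the realization map. -/
noncomputable def Tmap (ρ : QuiverRep K Q) (v w : V) (m : FreeMonoid X) :
    ρ.space v →ₗ[K] ρ.space w :=
  letI := Classical.propDecidable (∃ p : LQPath Q v w, p.label = m)
  if h : ∃ p : LQPath Q v w, p.label = m then ρ.pathMap h.choose else 0

theorem realize_eq (ρ : QuiverRep K Q) (v w : V) (f : FreeAlg K X) :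
    ρ.realize v w f = Finsupp.linearCombination K (ρ.Tmap v w) f.coeff := by
  rw [Finsupp.linearCombination_apply]
  rfl

theorem Tmap_eq (ρ : QuiverRep K Q) (hρ : ρ.Consistent) {v w : V} {m : FreeMonoid X}
    (q : LQPath Q v w) (hq : q.label = m) : ρ.Tmap v w m = ρ.pathMap q := by
  have h : ∃ p : LQPath Q v w, p.label = m := ⟨q, hq⟩
  rw [Tmap, dif_pos h]
  exact hρ v w _ q (h.choose_spec.trans hq.symm)

theorem Tmap_eq_zero (ρ : QuiverRep K Q) {v w : V} {m : FreeMonoid X}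
    (h : ¬∃ p : LQPath Q v w, p.label = m) : ρ.Tmap v w m = 0 := by
  rw [Tmap, dif_neg h]

end QuiverRep

theorem monom_mul_mul_monom {K : Type*} [Field K] (a b : FreeMonoid X) (g : FreeAlg K X) :
    monom K a * g * monom K b
      = ∑ m ∈ (g.coeff : FreeMonoid X →₀ K).support,
          MonoidAlgebra.single (a * m * b) ((g.coeff : FreeMonoid X →₀ K) m) := by
  conv_lhs => rw [← MonoidAlgebra.sum_coeff_single g]
  rw [Finsupp.sum, Finset.mul_sum, Finset.sum_mul]
  refine Finset.sum_congr rfl fun m _ => ?_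
  simp [monom, MonoidAlgebra.of_apply, MonoidAlgebra.single_mul_single]

theorem key_monom {K : Type*} [Field K] (ρ : QuiverRep K Q) (hρ : ρ.Consistent)
    (g : FreeAlg K X) (hu : Q.UniformlyCompatible g)
    (hz : ∀ v w : V, (v, w) ∈ Q.sigmaP g → ρ.realize v w g = 0)
    (a b : FreeMonoid X) (v w : V) :
    Finsupp.linearCombination K (ρ.Tmap v w) (monom K a * g * monom K b).coeff = 0 := by
  have hstep : Finsupp.linearCombination K (ρ.Tmap v w) (monom K a * g * monom K b).coeff
      = ∑ m ∈ (g.coeff : FreeMonoid X →₀ K).support,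
          ((g.coeff : FreeMonoid X →₀ K) m) • ρ.Tmap v w (a * m * b) := by
    rw [monom_mul_mul_monom, MonoidAlgebra.coeff_sum, map_sum]
    simp [Finsupp.linearCombination_single, MonoidAlgebra.coeff_single]
  rw [hstep]
  by_cases hex : ∃ m ∈ (g.coeff : FreeMonoid X →₀ K).support,
      ∃ p : LQPath Q v w, p.label = a * m * b
  · obtain ⟨m1, hm1, P, hP⟩ := hex
    obtain ⟨w1, p1, pb, hp1, hpb⟩ := P.label_split (a * m1) b hP
    obtain ⟨w2, pa, pm, hpa, hpm⟩ := p1.label_split a m1 hp1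
    have hsigM : ∀ m ∈ (g.coeff : FreeMonoid X →₀ K).support, (w1, w2) ∈ Q.sigmaM m := by
      intro m hm
      rw [hu.2 m hm m1 hm1]
      exact ⟨pm, hpm⟩
    have hsig : (w1, w2) ∈ Q.sigmaP g := by
      rw [LabelledQuiver.sigmaP, Set.mem_iInter₂]
      exact hsigM
    have hz' : (∑ m ∈ (g.coeff : FreeMonoid X →₀ K).support,
        ((g.coeff : FreeMonoid X →₀ K) m) • ρ.Tmap w1 w2 m) = 0 := by
      have := hz w1 w2 hsig
      rw [ρ.realize_eq, Finsupp.linearCombination_apply, Finsupp.sum] at this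
      exact this
    have hterm : ∀ m ∈ (g.coeff : FreeMonoid X →₀ K).support,
        ρ.Tmap v w (a * m * b)
          = (ρ.pathMap pa).comp ((ρ.Tmap w1 w2 m).comp (ρ.pathMap pb)) := by
      intro m hm
      obtain ⟨q, hq⟩ := hsigM m hm
      have h1 : ρ.Tmap w1 w2 m = ρ.pathMap q := ρ.Tmap_eq hρ q hq
      have hbig : ((pb.comp q).comp pa).label = a * m * b := by
        rw [LQPath.label_comp, LQPath.label_comp, hpa, hq, hpb, mul_assoc]
      rw [ρ.Tmap_eq hρ _ hbig, ρ.pathMap_comp, ρ.pathMap_comp, h1]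
    calc (∑ m ∈ (g.coeff : FreeMonoid X →₀ K).support,
            ((g.coeff : FreeMonoid X →₀ K) m) • ρ.Tmap v w (a * m * b))
        = ∑ m ∈ (g.coeff : FreeMonoid X →₀ K).support,
            ((g.coeff : FreeMonoid X →₀ K) m) •
              ((ρ.pathMap pa).comp ((ρ.Tmap w1 w2 m).comp (ρ.pathMap pb))) := by
          exact Finset.sum_congr rfl fun m hm => by rw [hterm m hm]
      _ = (ρ.pathMap pa).comp
            (((∑ m ∈ (g.coeff : FreeMonoid X →₀ K).support,
              ((g.coeff : FreeMonoid X →₀ K) m) • ρ.Tmap w1 w2 m)).comp (ρ.pathMap pb)) := by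
          ext x
          simp [LinearMap.sum_apply, LinearMap.comp_apply, LinearMap.smul_apply, map_sum,
            map_smul]
      _ = 0 := by rw [hz']; simp
  · push_neg at hex
    refine Finset.sum_eq_zero fun m hm => ?_
    rw [ρ.Tmap_eq_zero (by exact fun ⟨p, hp⟩ => (hex m hm p hp).elim)]
    simp

theorem key_gen {K : Type*} [Field K] (ρ : QuiverRep K Q) (hρ : ρ.Consistent)
    (g : FreeAlg K X) (hu : Q.UniformlyCompatible g)
    (hz : ∀ v w : V, (v, w) ∈ Q.sigmaP g → ρ.realize v w g = 0)
    (v w : V) (a b : FreeAlg K X) :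
    Finsupp.linearCombination K (ρ.Tmap v w) (a * g * b).coeff = 0 := by
  induction a using MonoidAlgebra.induction_on with
  | of ma =>
    induction b using MonoidAlgebra.induction_on with
    | of mb => exact key_monom ρ hρ g hu hz ma mb v w
    | add b1 b2 h1 h2 =>
      have he : MonoidAlgebra.of K (FreeMonoid X) ma * g * (b1 + b2)
          = MonoidAlgebra.of K (FreeMonoid X) ma * g * b1
            + MonoidAlgebra.of K (FreeMonoid X) ma * g * b2 := mul_add _ _ _
      calc Finsupp.linearCombination K (ρ.Tmap v w)
              (MonoidAlgebra.of K (FreeMonoid X) ma * g * (b1 + b2)).coeff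
          = Finsupp.linearCombination K (ρ.Tmap v w)
              (MonoidAlgebra.of K (FreeMonoid X) ma * g * b1).coeff
            + Finsupp.linearCombination K (ρ.Tmap v w)
              (MonoidAlgebra.of K (FreeMonoid X) ma * g * b2).coeff := by
            rw [he, MonoidAlgebra.coeff_add]; exact map_add _ _ _
        _ = 0 := by rw [h1, h2, add_zero]
    | smul r b hb =>
      have he : MonoidAlgebra.of K (FreeMonoid X) ma * g * (r • b)
          = r • (MonoidAlgebra.of K (FreeMonoid X) ma * g * b) := mul_smul_comm _ _ _
      calc Finsupp.linearCombination K (ρ.Tmap v w)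
              (MonoidAlgebra.of K (FreeMonoid X) ma * g * (r • b)).coeff
          = r • Finsupp.linearCombination K (ρ.Tmap v w)
              (MonoidAlgebra.of K (FreeMonoid X) ma * g * b).coeff := by
            rw [he, MonoidAlgebra.coeff_smul]; exact map_smul _ _ _
        _ = 0 := by rw [hb, smul_zero]
  | add a1 a2 h1 h2 =>
    have he : (a1 + a2) * g * b = a1 * g * b + a2 * g * b := by
      rw [add_mul, add_mul]
    calc Finsupp.linearCombination K (ρ.Tmap v w) ((a1 + a2) * g * b).coeff
        = Finsupp.linearCombination K (ρ.Tmap v w) (a1 * g * b).coeff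
          + Finsupp.linearCombination K (ρ.Tmap v w) (a2 * g * b).coeff := by
          rw [he, MonoidAlgebra.coeff_add]; exact map_add _ _ _
      _ = 0 := by rw [h1, h2, add_zero]
  | smul r a ha =>
    have he : (r • a) * g * b = r • (a * g * b) := by
      rw [smul_mul_assoc, smul_mul_assoc]
    calc Finsupp.linearCombination K (ρ.Tmap v w) ((r • a) * g * b).coeff
        = r • Finsupp.linearCombination K (ρ.Tmap v w) (a * g * b).coeff := by
          rw [he, MonoidAlgebra.coeff_smul]; exact map_smul _ _ _
      _ = 0 := by rw [ha, smul_zero]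

end AuxiliaryLemmas

/-- Let `f` lie in the two-sided ideal generated by `F ⊆ K⟨X⟩`, let `Q` be a
labelled quiver such that `f` is compatible and all elements of `F` are uniformly compatible
with `Q`. Then for every consistent representation of `Q` such that every realization of every
element of `F` is zero, every realization of `f` is zero: `φ_{v,w}(f) = 0` for all
`(v, w) ∈ σ(f)`. -/
theorem main_theorem_Klinear {K X : Type*} [Field K] (F : Set (FreeAlg K X))
    (f : FreeAlg K X) (hf : MemIdeal F f) {V E : Type*} (Q : LabelledQuiver V E X)
    (hcf : Q.Compatible f) (hF : ∀ g ∈ F, Q.UniformlyCompatible g)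
    (ρ : QuiverRep K Q) (hρ : ρ.Consistent)
    (hzero : ∀ g ∈ F, ∀ v w : V, (v, w) ∈ Q.sigmaP g → ρ.realize v w g = 0) :
    ∀ v w : V, (v, w) ∈ Q.sigmaP f → ρ.realize v w f = 0 := by
  obtain ⟨n, A, B, G, hG, hfe⟩ := hf
  intro v w _
  rw [ρ.realize_eq, hfe]
  calc Finsupp.linearCombination K (ρ.Tmap v w) (∑ i, A i * G i * B i).coeff
      = ∑ i, Finsupp.linearCombination K (ρ.Tmap v w) (A i * G i * B i).coeff := by
        rw [MonoidAlgebra.coeff_sum]; exact map_sum _ _ _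
    _ = 0 := Finset.sum_eq_zero fun i _ =>
        key_gen ρ hρ (G i) (hF _ (hG i)) (fun v' w' h => hzero _ (hG i) v' w' h) v w (A i) (B i)
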